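/- The graphs K₄ ∪ C₄ and K₂ ∪ K₂ ∪ C₄ are locally equienergetic: e(K₄ ∪ C₄) = e(K₂ ∪ K₂ ∪ C₄). -/

import Mathlib

open SimpleGraph Matrix Finset

noncomputable section

/-- The adjacency matrix of a simple graph over `ℝ` is Hermitian. -/
lemma adjMatrix_isHermitian {V : Type*} [Fintype V] (G : SimpleGraph V)
    [DecidableRel G.Adj] : (G.adjMatrix ℝ).IsHermitian := by
  rw [Matrix.IsHermitian, Matrix.conjTranspose_eq_transpose_of_trivial]
  exact G.isSymm_adjMatrix

/-- The energy of a finite simple graph: the sum of the absolute values of the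
eigenvalues of its adjacency matrix. -/
def graphEnergy {V : Type*} [Fintype V] [DecidableEq V] (G : SimpleGraph V) : ℝ :=
  letI := Classical.decRel G.Adj
  ∑ i, |(adjMatrix_isHermitian G).eigenvalues i|

/-- The local energy of `G` at a vertex `v`: the energy of `G` minus the energy of the
induced subgraph obtained by deleting `v`. -/
def localEnergyAt {V : Type*} [Fintype V] [DecidableEq V] (G : SimpleGraph V) (v : V) : ℝ :=
  graphEnergy G - graphEnergy (G.induce {u | u ≠ v})

/-- The local energy of `G`: the sum of the local energies at all vertices. -/
def localEnergy {V : Type*} [Fintype V] [DecidableEq V] (G : SimpleGraph V) : ℝ :=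
  ∑ v, localEnergyAt G v

end

/-! Local energy is additive over disjoint unions, because deleting a vertex of one component
leaves the other untouched. Hence `e(K₄ ∪ C₄) - e(K₂ ∪ K₂ ∪ C₄) = e(K₄) - 2 e(K₂)`, and
`e(Kₙ) = 2n` for `n ≥ 2`: the spectrum of `Kₙ` is `n - 1` together with `-1` repeated `n - 1`
times, so `E(Kₙ) = 2(n - 1)` and every vertex deletion lowers the energy by `2`. -/

open Polynomial

namespace SimpleGraph

theorem graphEnergy_induce_congr {V : Type*} [DecidableEq V] (G : SimpleGraph V) {s t : Set V}
    [Fintype s] [Fintype t] (h : s = t) : graphEnergy (G.induce s) = graphEnergy (G.induce t) := by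
  subst h
  congr!

section Energy

variable {V W : Type*} [Fintype V] [DecidableEq V] [Fintype W] [DecidableEq W]

theorem graphEnergy_eq_sum_abs_roots (G : SimpleGraph V) [inst : DecidableRel G.Adj] :
    graphEnergy G = ((G.adjMatrix ℝ).charpoly.roots.map (|·|)).sum := by
  obtain rfl : Classical.decRel G.Adj = inst := Subsingleton.elim _ _
  let := Classical.decRel G.Adj
  rw [graphEnergy, Matrix.IsHermitian.roots_charpoly_eq_eigenvalues (_root_.adjMatrix_isHermitian G),
    Multiset.map_map]
  rfl

theorem Iso.graphEnergy_eq {G : SimpleGraph V} {H : SimpleGraph W} (e : G ≃g H) :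
    graphEnergy G = graphEnergy H := by
  classical
  have hA : H.adjMatrix ℝ = (G.adjMatrix ℝ).reindex e.toEquiv e.toEquiv := by
    ext i j
    exact if_congr e.symm.map_adj_iff.symm rfl rfl
  rw [graphEnergy_eq_sum_abs_roots, graphEnergy_eq_sum_abs_roots, hA, charpoly_reindex]

theorem graphEnergy_sum (G : SimpleGraph V) (H : SimpleGraph W) :
    graphEnergy (G ⊕g H) = graphEnergy G + graphEnergy H := by
  classical
  have hA : (G ⊕g H).adjMatrix ℝ = fromBlocks (G.adjMatrix ℝ) 0 0 (H.adjMatrix ℝ) := by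
    ext (i | i) (j | j) <;> simp
  simp only [graphEnergy_eq_sum_abs_roots, hA, charpoly_fromBlocks_zero₂₁]
  rw [roots_mul ((charpoly_monic _).mul (charpoly_monic _)).ne_zero, Multiset.map_add,
    Multiset.sum_add]

def Iso.induceSum (G : SimpleGraph V) (H : SimpleGraph W) (s : Set (V ⊕ W)) :
    (G ⊕g H).induce s ≃g G.induce (Sum.inl ⁻¹' s) ⊕g H.induce (Sum.inr ⁻¹' s) where
  toEquiv := Equiv.subtypeSum
  map_rel_iff' := by rintro ⟨a | b, _⟩ ⟨c | d, _⟩ <;> simp [Equiv.subtypeSum]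

theorem localEnergyAt_sum_inl (G : SimpleGraph V) (H : SimpleGraph W) (v : V) :
    localEnergyAt (G ⊕g H) (.inl v) = localEnergyAt G v := by
  classical
  have hG : Sum.inl ⁻¹' {u : V ⊕ W | u ≠ .inl v} = {u | u ≠ v} := by ext; simp
  have hH : Sum.inr ⁻¹' {u : V ⊕ W | u ≠ .inl v} = Set.univ := by ext; simp
  rw [localEnergyAt, localEnergyAt, graphEnergy_sum, (Iso.induceSum G H _).graphEnergy_eq,
    graphEnergy_sum, graphEnergy_induce_congr G hG, graphEnergy_induce_congr H hH,
    (induceUnivIso H).graphEnergy_eq]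
  ring

theorem localEnergyAt_sum_inr (G : SimpleGraph V) (H : SimpleGraph W) (w : W) :
    localEnergyAt (G ⊕g H) (.inr w) = localEnergyAt H w := by
  classical
  have hG : Sum.inl ⁻¹' {u : V ⊕ W | u ≠ .inr w} = Set.univ := by ext; simp
  have hH : Sum.inr ⁻¹' {u : V ⊕ W | u ≠ .inr w} = {u | u ≠ w} := by ext; simp
  rw [localEnergyAt, localEnergyAt, graphEnergy_sum, (Iso.induceSum G H _).graphEnergy_eq,
    graphEnergy_sum, graphEnergy_induce_congr G hG, graphEnergy_induce_congr H hH,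
    (induceUnivIso G).graphEnergy_eq]
  ring

theorem localEnergy_sum (G : SimpleGraph V) (H : SimpleGraph W) :
    localEnergy (G ⊕g H) = localEnergy G + localEnergy H := by
  simp only [localEnergy, Fintype.sum_sum_type, localEnergyAt_sum_inl, localEnergyAt_sum_inr]

end Energy

section CompleteGraph

variable {V : Type*} [Fintype V] [DecidableEq V]

theorem charpoly_adjMatrix_top (hV : 0 < Fintype.card V) :
    ((⊤ : SimpleGraph V).adjMatrix ℝ).charpoly =
      (X - C (-1)) ^ (Fintype.card V - 1) * (X - C ((Fintype.card V : ℝ) - 1)) := by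
  have hA : (⊤ : SimpleGraph V).adjMatrix ℝ = vecMulVec 1 1 - scalar V 1 := by
    ext i j
    by_cases h : i = j <;> simp [vecMulVec, h]
  obtain ⟨n, hn⟩ := Nat.exists_eq_add_of_lt hV
  rw [hA, charpoly_sub_scalar, charpoly_vecMulVec]
  simp [hn, smul_eq_C_mul]
  ring

theorem graphEnergy_top (hV : 0 < Fintype.card V) :
    graphEnergy (⊤ : SimpleGraph V) = 2 * ((Fintype.card V : ℝ) - 1) := by
  have hne : (X - C (-1 : ℝ)) ^ (Fintype.card V - 1) * (X - C ((Fintype.card V : ℝ) - 1)) ≠ 0 :=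
    mul_ne_zero (pow_ne_zero _ (X_sub_C_ne_zero _)) (X_sub_C_ne_zero _)
  rw [graphEnergy_eq_sum_abs_roots, charpoly_adjMatrix_top hV, roots_mul hne, roots_pow,
    roots_X_sub_C, roots_X_sub_C]
  have hn : (1 : ℝ) ≤ Fintype.card V := by exact_mod_cast hV
  simp only [Multiset.map_add, Multiset.map_nsmul, Multiset.sum_add, Multiset.sum_nsmul,
    Multiset.map_singleton, Multiset.sum_singleton, abs_neg, abs_one, nsmul_eq_mul,
    Nat.cast_sub hV, Nat.cast_one, abs_of_nonneg (sub_nonneg.mpr hn)]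
  ring

theorem localEnergyAt_top (hV : 2 ≤ Fintype.card V) (v : V) :
    localEnergyAt (⊤ : SimpleGraph V) v = 2 := by
  have hcard : Fintype.card {u | u ≠ v} = Fintype.card V - 1 := by
    simp [Finset.filter_ne', Finset.card_erase_of_mem]
  rw [localEnergyAt, graphEnergy_top (by omega), ← completeGraph_eq_top, induce_top,
    graphEnergy_top (by omega), hcard, Nat.cast_sub (by omega)]
  ring

theorem localEnergy_top (hV : 2 ≤ Fintype.card V) :
    localEnergy (⊤ : SimpleGraph V) = 2 * Fintype.card V := by
  simp [localEnergy, localEnergyAt_top hV, mul_comm]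

end CompleteGraph

end SimpleGraph

/-- `e(K₄ ∪ C₄) = e(K₂ ∪ K₂ ∪ C₄)`. -/
theorem localEnergy_K4_C4 :
    localEnergy ((⊤ : SimpleGraph (Fin 4)) ⊕g cycleGraph 4) =
      localEnergy (((⊤ : SimpleGraph (Fin 2)) ⊕g (⊤ : SimpleGraph (Fin 2)))
        ⊕g cycleGraph 4) := by
  rw [localEnergy_sum, localEnergy_sum, localEnergy_sum, localEnergy_top (by simp),
    localEnergy_top (by simp)]
  norm_num
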